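/- Let e be an edge of a hypergraph system with |e| ≥ 2, g ∈ L_1(X, B_e, μ), and for every e' ∈ ∂e let u_{e'} be a B_{e'}-measurable function with 0 ≤ u_{e'} ≤ 1. Then |∫ g · ∏_{e' ∈ ∂e} u_{e'} dμ| ≤ ‖g‖_{S_{∂e}}, where ‖g‖_{S_{∂e}} = sup{ |∫_A g dμ| : A ∈ S_{∂e} }. -/

import Mathlib

open MeasureTheory ENNReal

/-- `A ⊆ ∏ i, X i` depends only on the coordinates in `e`. -/
def SetDependsOn {n : ℕ} {X : Fin n → Type*} (e : Finset (Fin n)) (A : Set (∀ i, X i)) : Prop :=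
  ∀ x y : ∀ i, X i, (∀ i ∈ e, x i = y i) → (x ∈ A ↔ y ∈ A)

/-- A function on `∏ i, X i` depending only on the coordinates in `e`. -/
def DependsOnF {n : ℕ} {X : Fin n → Type*} (e : Finset (Fin n)) (f : (∀ i, X i) → ℝ) : Prop :=
  ∀ x y : ∀ i, X i, (∀ i ∈ e, x i = y i) → f x = f y

/-- `A` belongs to `B_e`: it is measurable and depends only on the coordinates in `e`. -/
def CubeSet {n : ℕ} {X : Fin n → Type*} [∀ i, MeasurableSpace (X i)]
    (e : Finset (Fin n)) (A : Set (∀ i, X i)) : Prop :=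
  MeasurableSet A ∧ SetDependsOn e A

/-- The boundary `∂e` of `e`: subsets of `e` of size `|e| - 1`. -/
def bdry {n : ℕ} (e : Finset (Fin n)) : Finset (Finset (Fin n)) :=
  e.powerset.filter (fun e' => e'.card + 1 = e.card)

/-- `A ∈ S_{∂e}`: `A` is an intersection `⋂_{e' ∈ ∂e} A_{e'}` with `A_{e'} ∈ B_{e'}`. -/
def SPartial {n : ℕ} {X : Fin n → Type*} [∀ i, MeasurableSpace (X i)]
    (e : Finset (Fin n)) (A : Set (∀ i, X i)) : Prop :=
  ∃ F : Finset (Fin n) → Set (∀ i, X i),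
    (∀ e' ∈ bdry e, CubeSet e' (F e')) ∧ A = ⋂ e' ∈ bdry e, F e'

open Set

/-!
Write each weight `w = u e'` as `∫₀¹ 1_{τ < w} dτ`; by Fubini, `∫ h w = ∫_{(0,1]} ∫_{τ < w} h dτ`.
The super-level set `{τ < w}` lies in `B_{e'}`, and intersecting a set of `S_{∂e}` with it stays in
`S_{∂e}`, so `g · 1_{τ < w}` again has cut norm at most `K`. Induction on the number of weights
finishes the proof, the empty product being the case `A = univ`.
-/

section LayerCake

variable {Y : Type*} [MeasurableSpace Y] {μ : Measure Y} [SFinite μ] {h w : Y → ℝ}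

lemma volume_real_Iio_inter_Ioc_zero_one {a : ℝ} (ha0 : 0 ≤ a) (ha1 : a ≤ 1) :
    volume.real (Iio a ∩ Ioc 0 1) = a := by
  rw [show Iio a ∩ Ioc 0 1 = Ioo 0 a by
    ext τ; simp only [mem_inter_iff, mem_Iio, mem_Ioc, mem_Ioo]; grind,
    Real.volume_real_Ioo_of_le ha0, sub_zero]

theorem integral_mul_eq_setIntegral_Ioc_setIntegral_lt (hh : Integrable h μ) (hw : Measurable w)
    (hw0 : ∀ x, 0 ≤ w x) (hw1 : ∀ x, w x ≤ 1) :
    ∫ x, h x * w x ∂μ = ∫ τ in Ioc (0 : ℝ) 1, ∫ x in {x | τ < w x}, h x ∂μ := by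
  set ν := volume.restrict (Ioc (0 : ℝ) 1)
  set F := {p : ℝ × Y | p.1 < w p.2}.indicator (h ·.2)
  have hF : Integrable F (ν.prod μ) :=
    (hh.comp_snd ν).indicator (measurableSet_lt measurable_fst (hw.comp measurable_snd))
  have hF_fst (τ : ℝ) : ∫ x, F (τ, x) ∂μ = ∫ x in {x | τ < w x}, h x ∂μ :=
    integral_indicator (measurableSet_lt measurable_const hw)
  have hF_snd (x : Y) : ∫ τ, F (τ, x) ∂ν = h x * w x := by
    change ∫ τ, (Iio (w x)).indicator (fun _ => h x) τ ∂ν = _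
    rw [integral_indicator_const _ measurableSet_Iio, measureReal_restrict_apply measurableSet_Iio,
      volume_real_Iio_inter_Ioc_zero_one (hw0 x) (hw1 x), smul_eq_mul, mul_comm]
  simp_rw [← hF_fst, ← hF_snd]
  exact (integral_integral_swap (f := fun τ x => F (τ, x)) hF).symm

theorem abs_integral_mul_le_of_abs_setIntegral_lt_le (hh : Integrable h μ) (hw : Measurable w)
    (hw0 : ∀ x, 0 ≤ w x) (hw1 : ∀ x, w x ≤ 1) {K : ℝ}
    (hK : ∀ τ ∈ Ioc (0 : ℝ) 1, |∫ x in {x | τ < w x}, h x ∂μ| ≤ K) :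
    |∫ x, h x * w x ∂μ| ≤ K := by
  rw [integral_mul_eq_setIntegral_Ioc_setIntegral_lt hh hw hw0 hw1]
  simpa [Real.volume_Ioc] using
    norm_setIntegral_le_of_norm_le_const (μ := volume) measure_Ioc_lt_top
      fun τ hτ => (Real.norm_eq_abs _).trans_le (hK τ hτ)

end LayerCake

section CutNorm

variable {n : ℕ} {X : Fin n → Type*} [∀ i, MeasurableSpace (X i)]

lemma CubeSet.inter {e : Finset (Fin n)} {A B : Set (∀ i, X i)} (hA : CubeSet e A)
    (hB : CubeSet e B) : CubeSet e (A ∩ B) :=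
  ⟨hA.1.inter hB.1, fun x y hxy => and_congr (hA.2 x y hxy) (hB.2 x y hxy)⟩

lemma DependsOnF.cubeSet_setOf_lt {e : Finset (Fin n)} {u : (∀ i, X i) → ℝ}
    (hdep : DependsOnF e u) (hu : Measurable u) (τ : ℝ) : CubeSet e {x | τ < u x} :=
  ⟨measurableSet_lt measurable_const hu, fun x y hxy => show τ < u x ↔ τ < u y by rw [hdep x y hxy]⟩

lemma SPartial.univ (e : Finset (Fin n)) : SPartial (X := X) e Set.univ :=
  ⟨fun _ => Set.univ, fun _ _ => ⟨MeasurableSet.univ, fun _ _ _ => Iff.rfl⟩, by simp⟩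

lemma SPartial.inter_cubeSet {e e' : Finset (Fin n)} {A B : Set (∀ i, X i)} (hA : SPartial e A)
    (he' : e' ∈ bdry e) (hB : CubeSet e' B) : SPartial e (A ∩ B) := by
  classical
  obtain ⟨F, hF, rfl⟩ := hA
  refine ⟨Function.update F e' (F e' ∩ B), fun f hf => ?_, ?_⟩
  · rcases eq_or_ne f e' with rfl | hne
    · simpa using (hF f hf).inter hB
    · simpa [hne] using hF f hf
  · ext x
    simp only [mem_inter_iff, mem_iInter]
    constructor
    · rintro ⟨hxF, hxB⟩ f hf
      rcases eq_or_ne f e' with rfl | hne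
      · simpa using ⟨hxF f hf, hxB⟩
      · simpa [hne] using hxF f hf
    · intro hx
      have hxe' : x ∈ F e' ∩ B := by simpa using hx e' he'
      refine ⟨fun f hf => ?_, hxe'.2⟩
      rcases eq_or_ne f e' with rfl | hne
      · exact hxe'.1
      · simpa [hne] using hx f hf

theorem abs_integral_mul_prod_le_of_abs_setIntegral_le (μ : ∀ i, Measure (X i))
    [∀ i, SigmaFinite (μ i)] {e : Finset (Fin n)} {s : Finset (Finset (Fin n))}
    (hs : s ⊆ bdry e) {u : Finset (Fin n) → (∀ i, X i) → ℝ}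
    (humeas : ∀ e' ∈ s, Measurable (u e')) (hudep : ∀ e' ∈ s, DependsOnF e' (u e'))
    (hu0 : ∀ e' ∈ s, ∀ x, 0 ≤ u e' x) (hu1 : ∀ e' ∈ s, ∀ x, u e' x ≤ 1)
    {g : (∀ i, X i) → ℝ} (hg : Integrable g (Measure.pi μ)) {K : ℝ}
    (hK : ∀ A, SPartial e A → |∫ x in A, g x ∂(Measure.pi μ)| ≤ K) :
    |∫ x, g x * ∏ e' ∈ s, u e' x ∂(Measure.pi μ)| ≤ K := by
  classical
  induction s using Finset.induction_on generalizing g with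
  | empty => simpa using hK _ (SPartial.univ e)
  | @insert a t hat ih =>
    simp only [Finset.mem_insert, forall_eq_or_imp] at humeas hudep hu0 hu1
    have hprod : Integrable (fun x => g x * ∏ e' ∈ t, u e' x) (Measure.pi μ) :=
      hg.mul_bdd (c := 1) (Finset.measurable_prod t humeas.2).aestronglyMeasurable <|
        .of_forall fun x => by
          rw [Real.norm_eq_abs, abs_of_nonneg (Finset.prod_nonneg fun i hi => hu0.2 i hi x)]
          exact Finset.prod_le_one (fun i hi => hu0.2 i hi x) fun i hi => hu1.2 i hi x
    have hsplit (x) : g x * ∏ e' ∈ insert a t, u e' x = (g x * ∏ e' ∈ t, u e' x) * u a x := by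
      rw [Finset.prod_insert hat]; ring
    simp_rw [hsplit]
    refine abs_integral_mul_le_of_abs_setIntegral_lt_le hprod humeas.1 hu0.1 hu1.1 fun τ _ => ?_
    have hL : MeasurableSet {x | τ < u a x} := measurableSet_lt measurable_const humeas.1
    rw [← integral_indicator hL]
    simp_rw [indicator_mul_left]
    refine ih (fun f hf => hs (Finset.mem_insert_of_mem hf)) humeas.2 hudep.2 hu0.2 hu1.2
      (hg.indicator hL) fun A hA => ?_
    rw [setIntegral_indicator hL]
    exact hK _ (hA.inter_cubeSet (hs (Finset.mem_insert_self a t))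
      (hudep.1.cubeSet_setOf_lt humeas.1 τ))

end CutNorm

/-- `K` is any upper bound of the cut norm `‖g‖_{S_{∂e}}`. -/
theorem stmt8_general {n : ℕ} {X : Fin n → Type*} [∀ i, MeasurableSpace (X i)]
    (μ : ∀ i, Measure (X i)) [∀ i, IsProbabilityMeasure (μ i)]
    (e : Finset (Fin n))
    (g : (∀ i, X i) → ℝ)
    (hgint : Integrable g (Measure.pi μ))
    (u : Finset (Fin n) → (∀ i, X i) → ℝ)
    (humeas : ∀ e' ∈ bdry e, Measurable (u e'))
    (hudep : ∀ e' ∈ bdry e, DependsOnF e' (u e'))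
    (hu0 : ∀ e' ∈ bdry e, ∀ x, 0 ≤ u e' x) (hu1 : ∀ e' ∈ bdry e, ∀ x, u e' x ≤ 1)
    (K : ℝ)
    (hK : ∀ A : Set (∀ i, X i), SPartial e A → |∫ x in A, g x ∂(Measure.pi μ)| ≤ K) :
    |∫ x, g x * ∏ e' ∈ bdry e, u e' x ∂(Measure.pi μ)| ≤ K :=
  abs_integral_mul_prod_le_of_abs_setIntegral_le μ subset_rfl humeas hudep hu0 hu1 hgint hK

/-- **Fact 7.5.** If `g ∈ L_1(X, B_e, μ)` and for each `e' ∈ ∂e` the function `u e'`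
is `B_{e'}`-measurable with `0 ≤ u e' ≤ 1`, then `|∫ g ∏_{e' ∈ ∂e} u e' dμ| ≤ ‖g‖_{S_{∂e}}`
(stated for any upper bound `K` of the cut norm `sup { |∫_A g| : A ∈ S_{∂e} }`). -/
theorem stmt8 {n : ℕ} {X : Fin n → Type*} [∀ i, MeasurableSpace (X i)]
    (μ : ∀ i, Measure (X i)) [∀ i, IsProbabilityMeasure (μ i)]
    (e : Finset (Fin n)) (he : 2 ≤ e.card)
    (g : (∀ i, X i) → ℝ) (hgmeas : Measurable g) (hgdep : DependsOnF e g)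
    (hgint : Integrable g (Measure.pi μ))
    (u : Finset (Fin n) → (∀ i, X i) → ℝ)
    (humeas : ∀ e' ∈ bdry e, Measurable (u e'))
    (hudep : ∀ e' ∈ bdry e, DependsOnF e' (u e'))
    (hu0 : ∀ e' ∈ bdry e, ∀ x, 0 ≤ u e' x) (hu1 : ∀ e' ∈ bdry e, ∀ x, u e' x ≤ 1)
    (K : ℝ)
    (hK : ∀ A : Set (∀ i, X i), SPartial e A → |∫ x in A, g x ∂(Measure.pi μ)| ≤ K) :
    |∫ x, g x * ∏ e' ∈ bdry e, u e' x ∂(Measure.pi μ)| ≤ K :=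
  stmt8_general μ e g hgint u humeas hudep hu0 hu1 K hK
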